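/- arXiv:1905.03178 — 3 statements merged into one kernel-verified Lean document; each statement's English description precedes it below -/
import Mathlib

section
/- The inverse of Harish-Chandra's c-function for the complex unit ball, c(λ)^{-1} = 2^{iλ-n} Γ((n+iλ)/2)² / (Γ(n)Γ(iλ)), satisfies |c(λ)|^{-1} ≤ C₁ + C₂|λ|^{n-1/2} for all λ with Re(iλ) ≥ 0, for suitable constants C₁, C₂ > 0. -/
/-!
With `z = iλ/2`, Legendre's duplication formula `Γ(z)Γ(z + 1/2) = 2^(1-2z) √π Γ(2z)` turns
`c(λ)⁻¹` into a bounded multiple of `Γ(z + n/2)² / (Γ(z)Γ(z + 1/2))`. For `Re w ≥ 0` a half-step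
costs at most `|Γ(w + 1/2)|² ≤ 3(1 + |w|) |Γ(w)|²`: in Euler's product `GammaSeq` this reads
`N ∏ |w + j|² ≤ 3(1 + |w|) ∏ |w + 1/2 + j|²`, which telescopes through
`|w + j|² |w + j + 1|² ≤ |w + j + 1/2|⁴` once `j ≥ |Im w|`. Reaching `z + n/2` from `z` and from
`z + 1/2` takes `n` and `n - 1` half-steps, whence the exponent `n - 1/2`.
-/

open Complex

noncomputable section

/-- The inverse `c(λ)⁻¹ = 2^(iλ-n) Γ((n+iλ)/2)² / (Γ(n)Γ(iλ))` of Harish-Chandra's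
`c`-function for the complex unit ball of dimension `n`. -/
def cFunInv (n : ℕ) (lam : ℂ) : ℂ :=
  (2 : ℂ) ^ (Complex.I * lam - n) * Complex.Gamma (((n : ℂ) + Complex.I * lam) / 2) ^ 2 /
    (Complex.Gamma (n : ℂ) * Complex.Gamma (Complex.I * lam))

open Finset Filter
open scoped Nat Real

variable {w : ℂ}

theorem Complex.normSq_le_normSq_add_half (hw : 0 ≤ w.re) :
    normSq w ≤ normSq (w + 1 / 2) := by
  simp only [normSq_apply, add_re, add_im, div_ofNat_re, div_ofNat_im, one_re, one_im]
  nlinarith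

theorem Complex.normSq_mul_normSq_add_one_le (hw : |w.im| ≤ w.re) :
    normSq w * normSq (w + 1) ≤ normSq (w + 1 / 2) ^ 2 := by
  have him : w.im ^ 2 ≤ w.re ^ 2 := sq_le_sq' (abs_le.mp hw).1 (abs_le.mp hw).2
  simp only [normSq_apply, add_re, add_im, div_ofNat_re, div_ofNat_im, one_re, one_im]
  nlinarith [abs_nonneg w.im]

theorem prod_Ico_sq_mul_le {a b : ℕ → ℝ} {K N : ℕ} (ha : ∀ j, 0 ≤ a j)
    (hab : ∀ j, K ≤ j → j < N → a j * a (j + 1) ≤ b j ^ 2) (hKN : K ≤ N) :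
    (∏ j ∈ Ico K N, a j) ^ 2 * a N ≤ a K * (∏ j ∈ Ico K N, b j) ^ 2 := by
  induction N, hKN using Nat.le_induction with
  | base => simp
  | succ N hKN ih =>
    rw [prod_Ico_succ_top hKN, prod_Ico_succ_top hKN]
    calc ((∏ j ∈ Ico K N, a j) * a N) ^ 2 * a (N + 1)
          = ((∏ j ∈ Ico K N, a j) ^ 2 * a N) * (a N * a (N + 1)) := by ring
      _ ≤ (a K * (∏ j ∈ Ico K N, b j) ^ 2) * b N ^ 2 :=
          mul_le_mul (ih fun j hKj hjN => hab j hKj (hjN.trans N.lt_succ_self))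
            (hab N hKN N.lt_succ_self) (mul_nonneg (ha N) (ha (N + 1)))
            (mul_nonneg (ha K) (sq_nonneg _))
      _ = a K * ((∏ j ∈ Ico K N, b j) * b N) ^ 2 := by ring

theorem Complex.normSq_add_natCast_le_normSq_add_half_add (hw : 0 ≤ w.re) (j : ℕ) :
    normSq (w + j) ≤ normSq (w + 1 / 2 + j) := by
  simpa only [add_right_comm w] using
    normSq_le_normSq_add_half (w := w + j) (by simpa using hw.trans (by simp))

theorem Complex.natCast_mul_prod_normSq_le_of_abs_im_le (hw : 0 ≤ w.re) {K N : ℕ}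
    (hK : |w.im| ≤ K) (hKN : K ≤ N) :
    N * ∏ j ∈ range (N + 1), normSq (w + j) ≤
      ‖w + K‖ * ∏ j ∈ range (N + 1), normSq (w + 1 / 2 + j) := by
  set a : ℕ → ℝ := fun j => normSq (w + j)
  set b : ℕ → ℝ := fun j => normSq (w + 1 / 2 + j)
  have ha : ∀ j, 0 ≤ a j := fun j => normSq_nonneg _
  have htel : ∀ j, K ≤ j → j < N + 1 → a j * a (j + 1) ≤ b j ^ 2 := fun j hKj _ => by
    have hj : |w.im| ≤ j := hK.trans (by exact_mod_cast hKj)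
    simpa only [a, b, add_right_comm w, Nat.cast_succ, add_assoc] using
      normSq_mul_normSq_add_one_le (w := w + j) (by simpa using hj.trans (by simpa using hw))
  have haN : (N : ℝ) ^ 2 ≤ a (N + 1) := by
    have : (N : ℝ) ≤ ‖w + (N + 1 : ℕ)‖ := (re_le_norm _).trans' (by simp; linarith)
    simpa only [a, normSq_eq_norm_sq] using pow_le_pow_left₀ (by positivity) this 2
  have hpos : 0 < a (N + 1) := normSq_pos.mpr fun h => by
    have := congr_arg re h
    simp only [add_re, natCast_re, one_re, zero_re, Nat.cast_succ] at this
    linarith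
  rw [← prod_range_mul_prod_Ico a (by omega : K ≤ N + 1),
    ← prod_range_mul_prod_Ico b (by omega : K ≤ N + 1)]
  set P := ∏ j ∈ range K, a j
  set Q := ∏ j ∈ range K, b j
  set R := ∏ j ∈ Ico K (N + 1), a j
  set S := ∏ j ∈ Ico K (N + 1), b j
  have hPQ : P ≤ Q := prod_le_prod (fun j _ => ha j) fun j _ =>
    normSq_add_natCast_le_normSq_add_half_add hw j
  have hRS : R ^ 2 * a (N + 1) ≤ a K * S ^ 2 := prod_Ico_sq_mul_le ha htel (by omega)
  have hP : 0 ≤ P := prod_nonneg fun j _ => ha j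
  have hQS : 0 ≤ Q * S := mul_nonneg (prod_nonneg fun j _ => normSq_nonneg _)
    (prod_nonneg fun j _ => normSq_nonneg _)
  refine le_of_pow_le_pow_left₀ two_ne_zero (by positivity) (le_of_mul_le_mul_right ?_ hpos)
  calc (N * (P * R)) ^ 2 * a (N + 1) = N ^ 2 * P ^ 2 * (R ^ 2 * a (N + 1)) := by ring
    _ ≤ a (N + 1) * Q ^ 2 * (a K * S ^ 2) := by gcongr
    _ = (‖w + K‖ * (Q * S)) ^ 2 * a (N + 1) := by simp only [a, normSq_eq_norm_sq]; ring

theorem Complex.natCast_mul_prod_normSq_le (hw : 0 ≤ w.re) (N : ℕ) :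
    N * ∏ j ∈ range (N + 1), normSq (w + j) ≤
      3 * (1 + ‖w‖) * ∏ j ∈ range (N + 1), normSq (w + 1 / 2 + j) := by
  set K := ⌈|w.im|⌉₊
  have hK : (K : ℝ) ≤ ‖w‖ + 1 :=
    (Nat.ceil_lt_add_one (abs_nonneg _)).le.trans (by linarith [abs_im_le_norm w])
  rcases lt_or_ge N K with hNK | hKN
  · have hN : (N : ℝ) ≤ 3 * (1 + ‖w‖) := by
      have : (N : ℝ) < K := by exact_mod_cast hNK
      linarith [norm_nonneg w]
    exact mul_le_mul hN (prod_le_prod (fun j _ => normSq_nonneg _)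
      fun j _ => normSq_add_natCast_le_normSq_add_half_add hw j)
      (prod_nonneg fun j _ => normSq_nonneg _) (by positivity)
  · refine (natCast_mul_prod_normSq_le_of_abs_im_le hw (Nat.le_ceil _) hKN).trans ?_
    gcongr
    · exact prod_nonneg fun j _ => normSq_nonneg _
    · exact (norm_add_le _ _).trans (by simp only [norm_natCast]; linarith [norm_nonneg w])

theorem Complex.add_ofReal_ne_zero (hw : 0 ≤ w.re) (hw0 : w ≠ 0) {r : ℝ} (hr : 0 ≤ r) :
    w + r ≠ 0 := by
  intro h
  have hre : w.re + r = 0 := by simpa using congr_arg re h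
  have hr0 : r = 0 := by linarith
  exact hw0 (by simpa [hr0] using h)

theorem Complex.sq_norm_GammaSeq (v : ℂ) {N : ℕ} (hN : N ≠ 0) :
    ‖GammaSeq v N‖ ^ 2 =
      (N : ℝ) ^ (2 * v.re) * (N ! : ℝ) ^ 2 / ∏ j ∈ range (N + 1), normSq (v + j) := by
  rw [GammaSeq, norm_div, norm_mul, norm_prod, norm_natCast_cpow_of_pos (Nat.pos_of_ne_zero hN),
    norm_natCast, div_pow, mul_pow, ← prod_pow, mul_comm 2 v.re, Real.rpow_mul N.cast_nonneg,
    Real.rpow_two]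
  simp only [normSq_eq_norm_sq]

theorem Complex.prod_normSq_add_natCast_pos (hw : 0 ≤ w.re) (hw0 : w ≠ 0) (N : ℕ) :
    0 < ∏ j ∈ range (N + 1), normSq (w + j) :=
  prod_pos fun j _ => normSq_pos.mpr (by
    simpa using add_ofReal_ne_zero hw hw0 (Nat.cast_nonneg (α := ℝ) j))

theorem Complex.sq_norm_GammaSeq_add_half_le (hw : 0 ≤ w.re) (hw0 : w ≠ 0) {N : ℕ}
    (hN : N ≠ 0) :
    ‖GammaSeq (w + 1 / 2) N‖ ^ 2 ≤ 3 * (1 + ‖w‖) * ‖GammaSeq w N‖ ^ 2 := by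
  have hw' : 0 ≤ (w + 1 / 2).re := by simp; linarith
  have hw0' : w + 1 / 2 ≠ 0 := by
    simpa using add_ofReal_ne_zero hw hw0 (r := 1 / 2) (by norm_num)
  have hA := prod_normSq_add_natCast_pos hw hw0 N
  have hB := prod_normSq_add_natCast_pos hw' hw0' N
  have hNpow : (N : ℝ) ^ (2 * (w + 1 / 2).re) = (N : ℝ) ^ (2 * w.re) * N := by
    rw [show 2 * (w + 1 / 2).re = 2 * w.re + 1 by simp; ring,
      Real.rpow_add (by positivity), Real.rpow_one]
  rw [sq_norm_GammaSeq _ hN, sq_norm_GammaSeq _ hN, hNpow]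
  have key : (N : ℝ) / ∏ j ∈ range (N + 1), normSq (w + 1 / 2 + j) ≤
      3 * (1 + ‖w‖) / ∏ j ∈ range (N + 1), normSq (w + j) := by
    rw [div_le_div_iff₀ hB hA]
    exact natCast_mul_prod_normSq_le hw N
  calc (N : ℝ) ^ (2 * w.re) * N * (N ! : ℝ) ^ 2 / ∏ j ∈ range (N + 1), normSq (w + 1 / 2 + j)
      = (N : ℝ) ^ (2 * w.re) * (N ! : ℝ) ^ 2 *
          (N / ∏ j ∈ range (N + 1), normSq (w + 1 / 2 + j)) := by ring
    _ ≤ (N : ℝ) ^ (2 * w.re) * (N ! : ℝ) ^ 2 *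
          (3 * (1 + ‖w‖) / ∏ j ∈ range (N + 1), normSq (w + j)) := by gcongr
    _ = _ := by ring

theorem Complex.sq_norm_Gamma_add_half_le (hw : 0 ≤ w.re) (hw0 : w ≠ 0) :
    ‖Gamma (w + 1 / 2)‖ ^ 2 ≤ 3 * (1 + ‖w‖) * ‖Gamma w‖ ^ 2 := by
  refine le_of_tendsto_of_tendsto ((GammaSeq_tendsto_Gamma _).norm.pow 2)
    (((GammaSeq_tendsto_Gamma _).norm.pow 2).const_mul _) ?_
  filter_upwards [eventually_ne_atTop 0] with N hN
  exact sq_norm_GammaSeq_add_half_le hw hw0 hN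

theorem Complex.sq_norm_Gamma_add_nat_div_two_le_pow_mul (hw : 0 ≤ w.re) (hw0 : w ≠ 0) (k : ℕ)
    {M : ℝ} (hM : 3 * (1 + ‖w‖ + k / 2) ≤ M) :
    ‖Gamma (w + k / 2)‖ ^ 2 ≤ M ^ k * ‖Gamma w‖ ^ 2 := by
  induction k with
  | zero => simp
  | succ k ih =>
    have hk : (0 : ℝ) ≤ k / 2 := by positivity
    have hwk : 0 ≤ (w + (k / 2 : ℝ)).re := by simp only [add_re, ofReal_re]; linarith
    have hwk0 := add_ofReal_ne_zero hw hw0 hk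
    push_cast at hwk hwk0 hM
    have hstep : 3 * (1 + ‖w + k / 2‖) ≤ M := by
      refine le_trans ?_ hM
      have : ‖w + k / 2‖ ≤ ‖w‖ + k / 2 := (norm_add_le _ _).trans (by simp)
      linarith
    have hM0 : 0 ≤ M := le_trans (by positivity) hstep
    calc ‖Gamma (w + ((k + 1 : ℕ) : ℂ) / 2)‖ ^ 2 = ‖Gamma (w + k / 2 + 1 / 2)‖ ^ 2 := by
          push_cast; ring_nf
      _ ≤ 3 * (1 + ‖w + k / 2‖) * ‖Gamma (w + k / 2)‖ ^ 2 := sq_norm_Gamma_add_half_le hwk hwk0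
      _ ≤ M * (M ^ k * ‖Gamma w‖ ^ 2) := by gcongr; exact ih (by linarith)
      _ = M ^ (k + 1) * ‖Gamma w‖ ^ 2 := by ring

theorem Complex.sq_norm_Gamma_add_nat_div_two_le_rpow_mul (hw : 0 ≤ w.re) (hw0 : w ≠ 0) {n : ℕ}
    (hn : 1 ≤ n) {M : ℝ} (hM : 3 * (1 + ‖w‖ + n / 2) ≤ M) :
    ‖Gamma (w + n / 2)‖ ^ 2 ≤ M ^ ((n : ℝ) - 1 / 2) * (‖Gamma w‖ * ‖Gamma (w + 1 / 2)‖) := by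
  have hM0 : 0 < M := lt_of_lt_of_le (by positivity) hM
  have hw' : 0 ≤ (w + (1 / 2 : ℝ)).re := by simp only [add_re, ofReal_re]; linarith
  have hw0' := add_ofReal_ne_zero hw hw0 (r := 1 / 2) (by norm_num)
  push_cast at hw' hw0'
  have h₁ := sq_norm_Gamma_add_nat_div_two_le_pow_mul hw hw0 n hM
  have h₂ := sq_norm_Gamma_add_nat_div_two_le_pow_mul hw' hw0' (n - 1) (M := M) <| hM.trans' <| by
    have : ‖w + 1 / 2‖ ≤ ‖w‖ + 1 / 2 := (norm_add_le _ _).trans (by simp)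
    push_cast [Nat.cast_sub hn]
    linarith
  have hshift : w + 1 / 2 + ((n - 1 : ℕ) : ℂ) / 2 = w + n / 2 := by
    push_cast [Nat.cast_sub hn]; ring
  rw [hshift] at h₂
  have hpow : M ^ n * M ^ (n - 1) = (M ^ ((n : ℝ) - 1 / 2)) ^ 2 := by
    rw [← pow_add, ← Real.rpow_natCast, ← Real.rpow_mul_natCast hM0.le]
    congr 1
    push_cast [Nat.cast_sub hn]
    ring
  refine le_of_pow_le_pow_left₀ two_ne_zero (by positivity) ?_
  calc (‖Gamma (w + n / 2)‖ ^ 2) ^ 2 = ‖Gamma (w + n / 2)‖ ^ 2 * ‖Gamma (w + n / 2)‖ ^ 2 := by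
        ring
    _ ≤ (M ^ n * ‖Gamma w‖ ^ 2) * (M ^ (n - 1) * ‖Gamma (w + 1 / 2)‖ ^ 2) :=
        mul_le_mul h₁ h₂ (by positivity) (by positivity)
    _ = (M ^ ((n : ℝ) - 1 / 2) * (‖Gamma w‖ * ‖Gamma (w + 1 / 2)‖)) ^ 2 := by
        rw [mul_pow, ← hpow]; ring

theorem Complex.Gamma_ne_zero_of_re_nonneg {s : ℂ} (hs : 0 ≤ s.re) (hs0 : s ≠ 0) :
    Gamma s ≠ 0 :=
  Gamma_ne_zero fun m hm => by
    have hm0 : (m : ℝ) = 0 := le_antisymm (by simpa [hm] using hs) m.cast_nonneg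
    exact hs0 (by simpa [hm] using hm0)

theorem Complex.norm_Gamma_mul_norm_Gamma_add_half (s : ℂ) :
    ‖Gamma s‖ * ‖Gamma (s + 1 / 2)‖ = ‖Gamma (2 * s)‖ * 2 ^ (1 - 2 * s.re) * √π := by
  rw [← norm_mul, Gamma_mul_Gamma_add_half, norm_mul, norm_mul, norm_real, Real.norm_eq_abs,
    abs_of_nonneg (Real.sqrt_nonneg _), show (2 : ℂ) = ((2 : ℝ) : ℂ) by norm_num,
    norm_cpow_eq_rpow_re_of_pos two_pos]
  simp

theorem Real.add_rpow_le_two_rpow_mul_rpow_add_rpow {a b p : ℝ} (ha : 0 ≤ a) (hb : 0 ≤ b)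
    (hp : 0 ≤ p) : (a + b) ^ p ≤ 2 ^ p * (a ^ p + b ^ p) := by
  wlog hab : a ≤ b generalizing a b
  · simpa only [add_comm] using this hb ha (le_of_not_ge hab)
  calc (a + b) ^ p ≤ (2 * b) ^ p := by gcongr; linarith
    _ = 2 ^ p * b ^ p := Real.mul_rpow zero_le_two hb
    _ ≤ 2 ^ p * (a ^ p + b ^ p) := by
        gcongr; exact le_add_of_nonneg_left (Real.rpow_nonneg ha p)

theorem norm_cFunInv_le {n : ℕ} (hn : 1 ≤ n) {lam : ℂ} (hlam : 0 ≤ (I * lam).re) :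
    ‖cFunInv n lam‖ ≤
      2 ^ (1 - (n : ℝ)) * √π / ‖Gamma n‖ * (3 * (1 + n) + 3 * ‖lam‖) ^ ((n : ℝ) - 1 / 2) := by
  rcases eq_or_ne lam 0 with rfl | hlam0
  · -- `Γ 0 = 0` in Mathlib, so `cFunInv n 0 = 0`.
    simp only [cFunInv, mul_zero, Gamma_zero, div_zero, norm_zero]
    positivity
  set s := I * lam
  have hs0 : s ≠ 0 := mul_ne_zero I_ne_zero hlam0
  have hz : 0 ≤ (s / 2).re := by simp only [div_ofNat_re]; linarith
  have hz0 : s / 2 ≠ 0 := div_ne_zero hs0 two_ne_zero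
  have hM : 3 * (1 + ‖s / 2‖ + n / 2) ≤ 3 * (1 + n) + 3 * ‖lam‖ := by
    simp only [s, norm_div, norm_mul, norm_I, one_mul, Complex.norm_two]
    linarith [norm_nonneg lam, (n.cast_nonneg : (0 : ℝ) ≤ n)]
  have hΓs : 0 < ‖Gamma s‖ := norm_pos_iff.mpr (Gamma_ne_zero_of_re_nonneg hlam hs0)
  have hdup := norm_Gamma_mul_norm_Gamma_add_half (s / 2)
  rw [mul_div_cancel₀ s two_ne_zero, div_ofNat_re, mul_div_cancel₀ s.re two_ne_zero] at hdup
  have hnorm : ‖cFunInv n lam‖ =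
      2 ^ (s.re - n) * ‖Gamma (s / 2 + n / 2)‖ ^ 2 / (‖Gamma n‖ * ‖Gamma s‖) := by
    rw [cFunInv, show ((n : ℂ) + I * lam) / 2 = s / 2 + n / 2 by ring, norm_div, norm_mul,
      norm_mul, norm_pow, show (2 : ℂ) = ((2 : ℝ) : ℂ) by norm_num,
      norm_cpow_eq_rpow_re_of_pos two_pos]
    simp [s]
  set M := 3 * (1 + n) + 3 * ‖lam‖
  calc ‖cFunInv n lam‖
      ≤ 2 ^ (s.re - n) * (M ^ ((n : ℝ) - 1 / 2) * (‖Gamma s‖ * 2 ^ (1 - s.re) * √π)) /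
          (‖Gamma n‖ * ‖Gamma s‖) := by
        rw [hnorm, ← hdup]
        gcongr
        exact sq_norm_Gamma_add_nat_div_two_le_rpow_mul hz hz0 hn hM
    _ = 2 ^ (s.re - n + (1 - s.re)) * √π / ‖Gamma n‖ * M ^ ((n : ℝ) - 1 / 2) := by
        rw [Real.rpow_add two_pos]
        field_simp
    _ = 2 ^ (1 - (n : ℝ)) * √π / ‖Gamma n‖ * M ^ ((n : ℝ) - 1 / 2) := by ring_nf

/-- Polynomial growth bound for the inverse of Harish-Chandra's `c`-function:
`|c(λ)|⁻¹ ≤ C₁ + C₂ |λ|^(n - 1/2)` on the half-plane `Re(iλ) ≥ 0`. -/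
theorem cFunInv_poly_bound (n : ℕ) (hn : 1 ≤ n) :
    ∃ C₁ C₂ : ℝ, 0 < C₁ ∧ 0 < C₂ ∧
      ∀ lam : ℂ, 0 ≤ (Complex.I * lam).re →
        ‖cFunInv n lam‖ ≤ C₁ + C₂ * ‖lam‖ ^ ((n : ℝ) - 1 / 2) := by
  set p : ℝ := n - 1 / 2
  have hp : 0 ≤ p := by
    have : (1 : ℝ) ≤ n := by exact_mod_cast hn
    simp only [p]
    linarith
  set B := 2 ^ (1 - (n : ℝ)) * √π / ‖Gamma n‖
  have hB : 0 < B := by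
    have := norm_pos_iff.mpr (Gamma_ne_zero_of_re_pos (s := n) (by simp; omega))
    positivity
  refine ⟨B * 2 ^ p * (3 * (1 + n)) ^ p, B * 2 ^ p * 3 ^ p, by positivity, by positivity,
    fun lam hlam => ?_⟩
  calc ‖cFunInv n lam‖ ≤ B * (3 * (1 + n) + 3 * ‖lam‖) ^ p := norm_cFunInv_le hn hlam
    _ ≤ B * (2 ^ p * ((3 * (1 + n)) ^ p + (3 * ‖lam‖) ^ p)) := by
        gcongr
        exact Real.add_rpow_le_two_rpow_mul_rpow_add_rpow (by positivity) (by positivity) hp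
    _ = B * 2 ^ p * (3 * (1 + n)) ^ p + B * 2 ^ p * 3 ^ p * ‖lam‖ ^ p := by
        rw [Real.mul_rpow zero_le_three (norm_nonneg lam)]
        ring
end
end

section
/- Weighted Riesz–Thorin-type interpolation: if a linear operator T is bounded L¹_m → ℓ¹_m with norm t₁ and L^∞_m → ℓ^∞_m with norm t_∞, then for every 1 < p < ∞, T is bounded L^p_m → ℓ^p_m with norm at most t₁^{1/p} t_∞^{(p-1)/p}. -/
/-!
For `c ≥ 0` one has `c ^ p = p (p - 1) ∫₀^∞ λ ^ (p - 2) (c - λ)₊ dλ`, so after Tonelli the `p`-th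
power of an `L^p` norm is an average of the truncated `L¹` quantities `∫ (|g| - λ)₊`. Splitting `f`
radially at height `λ` as `f = h + (f - h)` with `|h m| ≤ λ` and `|(f - h) m| = (|f m| - λ)₊`, the
`L^∞` bound controls `T h` by `t∞ λ` and the `L¹` bound controls `T (f - h)`, whence
`∫ (|T f · m| - t∞ λ)₊ ≤ t₁ ∫ (|f m| - λ)₊`. Substituting `λ ↦ t∞ λ` in the layer-cake formula
gives `‖T f · m‖_p ^ p ≤ t₁ t∞ ^ (p - 1) ‖f m‖_p ^ p`.

Nothing is assumed measurable on the source side, so there the lower integral `∫⁻` is compared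
with that of a measurable minorant having the same truncated integrals at every level.
-/

open MeasureTheory Set
open scoped ENNReal

theorem integral_rpow_mul_sub {p R : ℝ} (hp : 1 < p) (hR : 0 ≤ R) :
    ∫ x in (0)..R, x ^ (p - 2) * (R - x) = R ^ p / (p * (p - 1)) := by
  have hpow : ∀ x : ℝ, 0 ≤ x → x ^ (p - 1) = x ^ (p - 2) * x := fun x hx => by
    rw [← Real.rpow_add_one' hx (by linarith)]; ring_nf
  have hsplit : EqOn (fun x => x ^ (p - 2) * (R - x)) (fun x => R * x ^ (p - 2) - x ^ (p - 1))
      (uIcc 0 R) := fun x hx => by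
    rw [uIcc_of_le hR] at hx
    simp only [hpow x hx.1]; ring
  rw [intervalIntegral.integral_congr hsplit, intervalIntegral.integral_sub
      ((intervalIntegral.intervalIntegrable_rpow' (by linarith)).const_mul R)
      (intervalIntegral.intervalIntegrable_rpow' (by linarith)),
    intervalIntegral.integral_const_mul, integral_rpow (Or.inl (by linarith)),
    integral_rpow (Or.inl (by linarith)), show p - 2 + 1 = p - 1 by ring,
    show p - 1 + 1 = p by ring,
    Real.zero_rpow (by linarith), Real.zero_rpow (by linarith), sub_zero, sub_zero]
  have hRp : R ^ p = R ^ (p - 1) * R := by rw [← Real.rpow_add_one' hR (by linarith)]; ring_nf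
  have : p - 1 ≠ 0 := by linarith
  rw [hRp]
  field_simp
  ring

theorem lintegral_rpow_mul_tsub {p : ℝ} (hp : 1 < p) (c : ℝ≥0∞) :
    ENNReal.ofReal (p * (p - 1)) *
      ∫⁻ x in Ioi 0, ENNReal.ofReal (x ^ (p - 2)) * (c - ENNReal.ofReal x) = c ^ p := by
  have hpp : 0 < p * (p - 1) := mul_pos (by linarith) (by linarith)
  rcases eq_or_ne c ⊤ with rfl | hc
  · have htop :
        ∫⁻ x in Ioi (0 : ℝ), ENNReal.ofReal (x ^ (p - 2)) * (⊤ - ENNReal.ofReal x) = ⊤ := by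
      rw [setLIntegral_congr_fun measurableSet_Ioi (g := fun _ => ⊤) fun x hx => by
        simp [ENNReal.top_sub ENNReal.ofReal_ne_top, Real.rpow_pos_of_pos (mem_Ioi.mp hx)]]
      simp
    rw [htop, ENNReal.top_rpow_of_pos (by linarith), ENNReal.mul_top (by simpa using hpp)]
  obtain ⟨R, hR, rfl⟩ : ∃ R, 0 ≤ R ∧ ENNReal.ofReal R = c :=
    ⟨c.toReal, ENNReal.toReal_nonneg, ENNReal.ofReal_toReal hc⟩
  have hint : ∫⁻ x in Ioi 0, ENNReal.ofReal (x ^ (p - 2)) * (ENNReal.ofReal R - ENNReal.ofReal x)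
      = ∫⁻ x in Ioc 0 R, ENNReal.ofReal (x ^ (p - 2) * (R - x)) := by
    rw [← Ioc_union_Ioi_eq_Ioi hR, lintegral_union measurableSet_Ioi (Ioc_disjoint_Ioi le_rfl),
      setLIntegral_congr_fun measurableSet_Ioi (g := fun _ => 0) fun x hx => by
        simp [tsub_eq_zero_of_le (ENNReal.ofReal_le_ofReal (mem_Ioi.mp hx).le)],
      lintegral_zero, add_zero]
    refine setLIntegral_congr_fun measurableSet_Ioc fun x hx => ?_
    rw [ENNReal.ofReal_mul (Real.rpow_nonneg hx.1.le _), ENNReal.ofReal_sub _ hx.1.le]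
  rw [hint, ← ofReal_integral_eq_lintegral_ofReal, ← intervalIntegral.integral_of_le hR,
    integral_rpow_mul_sub hp hR, ← ENNReal.ofReal_mul hpp.le, mul_div_cancel₀ _ hpp.ne',
    ENNReal.ofReal_rpow_of_nonneg hR (by linarith)]
  · exact (intervalIntegrable_iff_integrableOn_Ioc_of_le hR).mp <|
      (intervalIntegral.intervalIntegrable_rpow' (by linarith)).mul_continuousOn
        (continuous_const.sub continuous_id).continuousOn
  · exact (ae_restrict_iff' measurableSet_Ioc).mpr <| ae_of_all _ fun x hx =>
      mul_nonneg (Real.rpow_nonneg hx.1.le _) (sub_nonneg.mpr hx.2)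

theorem setLIntegral_Ioi_eq_mul_comp_mul_left (g : ℝ → ℝ≥0∞) {c : ℝ} (hc : 0 < c) :
    ∫⁻ t in Ioi 0, g t = ENNReal.ofReal c * ∫⁻ t in Ioi 0, g (c * t) := by
  have he := measurableEmbedding_mulLeft₀ hc.ne'
  have hmap : Measure.map (c * ·) (volume.restrict (Ioi 0)) =
      (ENNReal.ofReal c⁻¹ • volume).restrict (Ioi 0) := by
    rw [← abs_of_pos (inv_pos.mpr hc), ← Real.map_volume_mul_left hc.ne', he.restrict_map,
      preimage_const_mul_Ioi₀ _ hc, zero_div]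
  rw [← he.lintegral_map, hmap, Measure.restrict_smul, lintegral_smul_measure, smul_eq_mul,
    ← mul_assoc, ← ENNReal.ofReal_mul hc.le, mul_inv_cancel₀ hc.ne', ENNReal.ofReal_one, one_mul]

section LayerCake

variable {α : Type*} [MeasurableSpace α]

theorem lintegral_rpow_eq_lintegral_tsub (μ : Measure α) [SFinite μ] {f : α → ℝ≥0∞}
    (hf : Measurable f) {p : ℝ} (hp : 1 < p) :
    ∫⁻ a, f a ^ p ∂μ = ENNReal.ofReal (p * (p - 1)) *
      ∫⁻ t in Ioi 0, ENNReal.ofReal (t ^ (p - 2)) * ∫⁻ a, (f a - ENNReal.ofReal t) ∂μ := by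
  have hF : Measurable (Function.uncurry fun a (t : ℝ) =>
      ENNReal.ofReal (t ^ (p - 2)) * (f a - ENNReal.ofReal t)) := by fun_prop
  simp_rw [← lintegral_rpow_mul_tsub hp (f _)]
  rw [lintegral_const_mul _ hF.lintegral_prod_right, lintegral_lintegral_swap hF.aemeasurable]
  refine congrArg _ (lintegral_congr fun t => ?_)
  exact lintegral_const_mul _ (hf.sub measurable_const)

theorem exists_measurable_le_forall_rat_lintegral_tsub_le (μ : Measure α) (f : α → ℝ≥0∞) :
    ∃ g : α → ℝ≥0∞, Measurable g ∧ g ≤ f ∧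
      ∀ q : ℚ, ∫⁻ a, (f a - ENNReal.ofReal q) ∂μ ≤ ∫⁻ a, (g a - ENNReal.ofReal q) ∂μ := by
  choose φ hφm hφle hφeq using fun q : ℚ =>
    exists_measurable_le_lintegral_eq μ fun a => f a - ENNReal.ofReal q
  refine ⟨fun a => ⨆ q : ℚ, (φ q).support.indicator (fun a => φ q a + ENNReal.ofReal q) a,
    ?_, fun a => iSup_le fun q => ?_, fun q => ?_⟩
  · exact .iSup fun q =>
      ((hφm q).add_const _).indicator ((hφm q) (measurableSet_singleton 0).compl)
  · by_cases ha : a ∈ (φ q).support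
    · rw [indicator_of_mem ha]
      have hlt : ENNReal.ofReal q < f a :=
        tsub_pos_iff_lt.mp ((pos_iff_ne_zero.mpr ha).trans_le (hφle q a))
      calc φ q a + ENNReal.ofReal q ≤ f a - ENNReal.ofReal q + ENNReal.ofReal q := by
            gcongr; exact hφle q a
        _ = f a := tsub_add_cancel_of_le hlt.le
    · rw [indicator_of_notMem ha]; exact zero_le
  · rw [hφeq q]
    refine lintegral_mono fun a => ?_
    by_cases ha : a ∈ (φ q).support
    · refine ENNReal.le_sub_of_add_le_right ENNReal.ofReal_ne_top ?_
      refine le_trans (le_of_eq ?_) (le_iSup _ q)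
      rw [indicator_of_mem ha]
    · rw [Function.notMem_support.mp ha]; exact zero_le

theorem lintegral_tsub_le_of_forall_rat {μ : Measure α} {f g : α → ℝ≥0∞}
    (h : ∀ q : ℚ, ∫⁻ a, (f a - ENNReal.ofReal q) ∂μ ≤ ∫⁻ a, (g a - ENNReal.ofReal q) ∂μ)
    (c : ℝ≥0∞) : ∫⁻ a, (f a - c) ∂μ ≤ ∫⁻ a, (g a - c) ∂μ := by
  rcases eq_or_ne c ⊤ with rfl | hc
  · simp
  obtain ⟨ψ, hψm, hψle, hψeq⟩ := exists_measurable_le_lintegral_eq μ fun a => f a - c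
  have hinf : ⨅ n : ℕ, (n : ℝ≥0∞)⁻¹ = 0 := by
    rw [← ENNReal.inv_iSup, ENNReal.iSup_natCast, ENNReal.inv_top]
  have hψ : ∀ a, ψ a = ⨆ n : ℕ, (ψ a - (n : ℝ≥0∞)⁻¹) := fun a => by
    rw [← ENNReal.sub_iInf, hinf, tsub_zero]
  have hmono : Monotone fun (n : ℕ) a => ψ a - (n : ℝ≥0∞)⁻¹ := fun m n hmn a =>
    tsub_le_tsub_left (ENNReal.inv_le_inv.mpr (Nat.cast_le.mpr hmn)) _
  rw [hψeq, lintegral_congr hψ, lintegral_iSup (f := fun (n : ℕ) a => ψ a - (n : ℝ≥0∞)⁻¹)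
    (fun n => hψm.sub measurable_const) hmono]
  refine iSup_le fun n => ?_
  obtain ⟨q, -, hcq, hqc⟩ := ENNReal.lt_iff_exists_rat_btwn.mp
    (ENNReal.lt_add_right hc (ENNReal.inv_ne_zero.mpr (ENNReal.natCast_ne_top n)))
  calc ∫⁻ a, (ψ a - (n : ℝ≥0∞)⁻¹) ∂μ ≤ ∫⁻ a, (f a - ENNReal.ofReal q) ∂μ :=
        lintegral_mono fun a => calc
          ψ a - (n : ℝ≥0∞)⁻¹ ≤ f a - c - (n : ℝ≥0∞)⁻¹ := tsub_le_tsub_right (hψle a) _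
          _ = f a - (c + (n : ℝ≥0∞)⁻¹) := tsub_tsub _ _ _
          _ ≤ f a - ENNReal.ofReal q := tsub_le_tsub_left hqc.le _
    _ ≤ ∫⁻ a, (g a - ENNReal.ofReal q) ∂μ := h q
    _ ≤ ∫⁻ a, (g a - c) ∂μ := lintegral_mono fun a => tsub_le_tsub_left hcq.le _

theorem exists_measurable_le_forall_lintegral_tsub_eq (μ : Measure α) (f : α → ℝ≥0∞) :
    ∃ g : α → ℝ≥0∞, Measurable g ∧ g ≤ f ∧
      ∀ c : ℝ≥0∞, ∫⁻ a, (f a - c) ∂μ = ∫⁻ a, (g a - c) ∂μ := by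
  obtain ⟨g, hgm, hgf, hq⟩ := exists_measurable_le_forall_rat_lintegral_tsub_le μ f
  exact ⟨g, hgm, hgf, fun c => le_antisymm (lintegral_tsub_le_of_forall_rat hq c)
    (lintegral_mono fun a => tsub_le_tsub_right (hgf a) c)⟩

theorem mul_lintegral_lintegral_tsub_le_lintegral_rpow (μ : Measure α) (f : α → ℝ≥0∞) {p : ℝ}
    (hp : 1 < p) :
    ENNReal.ofReal (p * (p - 1)) *
      ∫⁻ t in Ioi 0, ENNReal.ofReal (t ^ (p - 2)) * ∫⁻ a, (f a - ENNReal.ofReal t) ∂μ ≤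
      ∫⁻ a, f a ^ p ∂μ := by
  obtain ⟨g, hgm, hgf, hg⟩ := exists_measurable_le_forall_lintegral_tsub_eq μ f
  simp_rw [hg]
  refine le_trans ?_ (lintegral_mono fun a => ENNReal.rpow_le_rpow (hgf a) (by linarith))
  rcases eq_or_ne (∫⁻ a, g a ^ p ∂μ) ⊤ with h | h
  · exact h ▸ le_top
  -- Tonelli needs `SFinite`; since `∫⁻ g ^ p < ∞`, `g` vanishes off a σ-finite set `s`.
  obtain ⟨s, -, hgs, hs⟩ :=
    (ENNReal.finStronglyMeasurable_of_measurable h (hgm.pow_const p)).exists_set_sigmaFinite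
  have hsupp : ∀ c, ∫⁻ a in s, (g a - c) ∂μ = ∫⁻ a, (g a - c) ∂μ := fun c =>
    setLIntegral_eq_of_support_subset fun a ha => by
      by_contra has
      have : g a = 0 := (ENNReal.rpow_eq_zero_iff_of_pos (by linarith)).mp (hgs a has)
      simp [this] at ha
  simp_rw [← hsupp, ← lintegral_rpow_eq_lintegral_tsub (μ.restrict s) hgm hp]
  exact setLIntegral_le_lintegral _ _

variable {β : Type*} [MeasurableSpace β]

theorem lintegral_rpow_le_of_lintegral_tsub_le {ρ : Measure β} [SFinite ρ] {f : β → ℝ≥0∞}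
    (hf : Measurable f) {μ : Measure α} {g : α → ℝ≥0∞} {C K p : ℝ} (hK : 0 < K) (hp : 1 < p)
    (h : ∀ t, 0 < t → ∫⁻ b, (f b - ENNReal.ofReal (K * t)) ∂ρ ≤
      ENNReal.ofReal C * ∫⁻ a, (g a - ENNReal.ofReal t) ∂μ) :
    ∫⁻ b, f b ^ p ∂ρ ≤ ENNReal.ofReal (C * K ^ (p - 1)) * ∫⁻ a, g a ^ p ∂μ := by
  have hK' : ENNReal.ofReal (C * K ^ (p - 1)) =
      ENNReal.ofReal K * (ENNReal.ofReal (K ^ (p - 2)) * ENNReal.ofReal C) := by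
    rw [ENNReal.ofReal_mul' (by positivity), show p - 1 = 1 + (p - 2) by ring,
      Real.rpow_one_add' hK.le (by linarith), ENNReal.ofReal_mul hK.le]
    ring
  calc ∫⁻ b, f b ^ p ∂ρ
      = ENNReal.ofReal (p * (p - 1)) * (ENNReal.ofReal K * ∫⁻ t in Ioi 0,
          ENNReal.ofReal ((K * t) ^ (p - 2)) * ∫⁻ b, (f b - ENNReal.ofReal (K * t)) ∂ρ) := by
        rw [lintegral_rpow_eq_lintegral_tsub ρ hf hp, setLIntegral_Ioi_eq_mul_comp_mul_left _ hK]
    _ ≤ ENNReal.ofReal (p * (p - 1)) * (ENNReal.ofReal K * ∫⁻ t in Ioi 0,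
          ENNReal.ofReal (K ^ (p - 2)) * ENNReal.ofReal C *
            (ENNReal.ofReal (t ^ (p - 2)) * ∫⁻ a, (g a - ENNReal.ofReal t) ∂μ)) := by
        gcongr _ * (_ * ?_)
        refine setLIntegral_mono' measurableSet_Ioi fun t ht => ?_
        rw [Real.mul_rpow hK.le (mem_Ioi.mp ht).le, ENNReal.ofReal_mul (by positivity)]
        calc _ ≤ ENNReal.ofReal (K ^ (p - 2)) * ENNReal.ofReal (t ^ (p - 2)) *
              (ENNReal.ofReal C * ∫⁻ a, (g a - ENNReal.ofReal t) ∂μ) := by gcongr; exact h t ht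
          _ = _ := by ring
    _ = ENNReal.ofReal (C * K ^ (p - 1)) * (ENNReal.ofReal (p * (p - 1)) * ∫⁻ t in Ioi 0,
          ENNReal.ofReal (t ^ (p - 2)) * ∫⁻ a, (g a - ENNReal.ofReal t) ∂μ) := by
        rw [lintegral_const_mul' _ _ (by finiteness), hK']
        ring
    _ ≤ ENNReal.ofReal (C * K ^ (p - 1)) * ∫⁻ a, g a ^ p ∂μ := by
        gcongr
        exact mul_lintegral_lintegral_tsub_le_lintegral_rpow μ g hp

theorem eLpNorm_le_of_lintegral_rpow_le {E F : Type*} [NormedAddCommGroup E]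
    [NormedAddCommGroup F] {μ : Measure α} {ρ : Measure β} {f : α → E} {g : β → F} {C p : ℝ}
    (hC : 0 ≤ C) (hp : 0 < p)
    (h : ∫⁻ b, ‖g b‖ₑ ^ p ∂ρ ≤ ENNReal.ofReal C * ∫⁻ a, ‖f a‖ₑ ^ p ∂μ) :
    eLpNorm g (ENNReal.ofReal p) ρ ≤
      ENNReal.ofReal (C ^ (1 / p)) * eLpNorm f (ENNReal.ofReal p) μ := by
  have hp' : ENNReal.ofReal p ≠ 0 := by simpa using hp
  rw [eLpNorm_eq_lintegral_rpow_enorm_toReal hp' ENNReal.ofReal_ne_top,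
    eLpNorm_eq_lintegral_rpow_enorm_toReal hp' ENNReal.ofReal_ne_top, ENNReal.toReal_ofReal hp.le,
    ← ENNReal.ofReal_rpow_of_nonneg hC (by positivity),
    ← ENNReal.mul_rpow_of_nonneg _ _ (by positivity)]
  exact ENNReal.rpow_le_rpow h (by positivity)

end LayerCake

section Truncation

variable {E : Type*} [NormedAddCommGroup E] [NormedSpace ℝ E] {r : ℝ}

theorem norm_min_one_div_norm_smul_le (hr : 0 ≤ r) (z : E) : ‖min 1 (r / ‖z‖) • z‖ ≤ r := by
  rcases eq_or_ne z 0 with rfl | hz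
  · simpa using hr
  rw [norm_smul, Real.norm_of_nonneg (by positivity)]
  calc min 1 (r / ‖z‖) * ‖z‖ ≤ r / ‖z‖ * ‖z‖ := by gcongr; exact min_le_right _ _
    _ = r := div_mul_cancel₀ _ (norm_ne_zero_iff.mpr hz)

theorem enorm_sub_min_one_div_norm_smul (hr : 0 ≤ r) (z : E) :
    ‖z - min 1 (r / ‖z‖) • z‖ₑ = ‖z‖ₑ - ENNReal.ofReal r := by
  rw [← ofReal_norm, ← ofReal_norm, ← ENNReal.ofReal_sub _ hr]
  rcases le_or_gt ‖z‖ r with hzr | hzr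
  · rw [ENNReal.ofReal_of_nonpos (sub_nonpos.mpr hzr)]
    rcases eq_or_ne z 0 with rfl | hz
    · simp
    rw [min_eq_left ((one_le_div (norm_pos_iff.mpr hz)).mpr hzr), one_smul, sub_self, norm_zero,
      ENNReal.ofReal_zero]
  · have hz : 0 < ‖z‖ := hr.trans_lt hzr
    have hs : r / ‖z‖ ≤ 1 := (div_le_one hz).mpr hzr.le
    rw [min_eq_right hs, show z - (r / ‖z‖) • z = (1 - r / ‖z‖) • z by rw [sub_smul, one_smul],
      norm_smul, Real.norm_of_nonneg (sub_nonneg.mpr hs),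
      sub_mul, one_mul, div_mul_cancel₀ _ hz.ne']

end Truncation

section Operator

variable {X Y : Type*} [MeasurableSpace X] [MeasurableSpace Y] {ν : Measure X} {ρ : Measure Y}
  {m : X → ℝ} {mseq : Y → ℝ} {T : (X → ℂ) → (Y → ℂ)} {t₁ tinf : ℝ}

theorem lintegral_enorm_tsub_le_of_L1_Linfty_bounds (hadd : ∀ f g, T (f + g) = T f + T g)
    (hbdd₁ : ∀ f : X → ℂ, eLpNorm (fun j => T f j * (mseq j : ℂ)) 1 ρ ≤
      ENNReal.ofReal t₁ * eLpNorm (fun x => f x * (m x : ℂ)) 1 ν)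
    (hbddinf : ∀ f : X → ℂ, eLpNorm (fun j => T f j * (mseq j : ℂ)) ⊤ ρ ≤
      ENNReal.ofReal tinf * eLpNorm (fun x => f x * (m x : ℂ)) ⊤ ν)
    (f : X → ℂ) {r : ℝ} (hr : 0 ≤ r) :
    ∫⁻ j, (‖T f j * mseq j‖ₑ - ENNReal.ofReal (tinf * r)) ∂ρ ≤
      ENNReal.ofReal t₁ * ∫⁻ x, (‖f x * m x‖ₑ - ENNReal.ofReal r) ∂ν := by
  set h : X → ℂ := fun x => min 1 (r / ‖f x * m x‖) • f x
  have hTh : ∀ᵐ j ∂ρ, ‖T h j * mseq j‖ₑ ≤ ENNReal.ofReal (tinf * r) := by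
    have hh : eLpNorm (fun x => h x * (m x : ℂ)) ⊤ ν ≤ ENNReal.ofReal r := by
      rw [eLpNorm_exponent_top]
      refine eLpNormEssSup_le_of_ae_bound (ae_of_all _ fun x => ?_)
      simpa only [h, smul_mul_assoc] using norm_min_one_div_norm_smul_le hr (f x * m x)
    filter_upwards [ae_le_eLpNormEssSup (f := fun j => T h j * (mseq j : ℂ))] with j hj
    rw [← eLpNorm_exponent_top] at hj
    rw [ENNReal.ofReal_mul' hr]
    exact hj.trans ((hbddinf h).trans (by gcongr))
  have hTf : ∀ j, T f j * mseq j = T (f - h) j * mseq j + T h j * mseq j := fun j => by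
    rw [← add_mul, ← Pi.add_apply, ← hadd, sub_add_cancel]
  calc ∫⁻ j, (‖T f j * mseq j‖ₑ - ENNReal.ofReal (tinf * r)) ∂ρ
      ≤ ∫⁻ j, ‖T (f - h) j * mseq j‖ₑ ∂ρ := by
        refine lintegral_mono_ae (hTh.mono fun j hj => tsub_le_iff_right.mpr ?_)
        rw [hTf]
        exact (enorm_add_le _ _).trans (by gcongr)
    _ ≤ ENNReal.ofReal t₁ * ∫⁻ x, ‖(f - h) x * m x‖ₑ ∂ν := by
        simpa only [eLpNorm_one_eq_lintegral_enorm] using hbdd₁ (f - h)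
    _ = ENNReal.ofReal t₁ * ∫⁻ x, (‖f x * m x‖ₑ - ENNReal.ofReal r) ∂ν := by
        simp only [Pi.sub_apply, sub_mul, h, smul_mul_assoc, enorm_sub_min_one_div_norm_smul hr]

end Operator

theorem weighted_riesz_thorin_general {X : Type*} [MeasurableSpace X] (ν : Measure X)
    (m : X → ℝ)
    (mseq : ℕ → ℝ)
    (T : (X → ℂ) → (ℕ → ℂ))
    (hadd : ∀ f g, T (f + g) = T f + T g)
    (t₁ tinf : ℝ) (ht₁ : 0 ≤ t₁) (htinf : 0 ≤ tinf)
    (hbdd₁ : ∀ f : X → ℂ,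
      eLpNorm (fun j => T f j * (mseq j : ℂ)) 1 Measure.count ≤
        ENNReal.ofReal t₁ * eLpNorm (fun x => f x * (m x : ℂ)) 1 ν)
    (hbddinf : ∀ f : X → ℂ,
      eLpNorm (fun j => T f j * (mseq j : ℂ)) ⊤ Measure.count ≤
        ENNReal.ofReal tinf * eLpNorm (fun x => f x * (m x : ℂ)) ⊤ ν)
    (p : ℝ) (hp : 1 < p) :
    ∀ f : X → ℂ,
      eLpNorm (fun j => T f j * (mseq j : ℂ)) (ENNReal.ofReal p) Measure.count ≤
        ENNReal.ofReal (t₁ ^ (1 / p) * tinf ^ ((p - 1) / p)) *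
          eLpNorm (fun x => f x * (m x : ℂ)) (ENNReal.ofReal p) ν := by
  intro f
  rcases htinf.eq_or_lt with rfl | htinf_pos
  · have hTf : (fun j => T f j * (mseq j : ℂ)) =ᵐ[Measure.count] 0 := by
      rw [← eLpNormEssSup_eq_zero_iff, ← eLpNorm_exponent_top]
      exact le_antisymm ((hbddinf f).trans_eq (by simp)) zero_le
    rw [eLpNorm_congr_ae hTf, eLpNorm_zero]
    exact zero_le
  have hexp : (t₁ * tinf ^ (p - 1)) ^ (1 / p) = t₁ ^ (1 / p) * tinf ^ ((p - 1) / p) := by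
    rw [Real.mul_rpow ht₁ (by positivity), ← Real.rpow_mul htinf, mul_one_div]
  rw [← hexp]
  exact eLpNorm_le_of_lintegral_rpow_le (by positivity) (by linarith) <|
    lintegral_rpow_le_of_lintegral_tsub_le measurable_from_top htinf_pos hp fun t ht =>
      lintegral_enorm_tsub_le_of_L1_Linfty_bounds hadd hbdd₁ hbddinf f ht.le

/-- Weighted Riesz–Thorin-type interpolation: if a linear operator `T` is bounded
`L¹_m → ℓ¹_m` with norm `t₁` and `L^∞_m → ℓ^∞_m` with norm `t∞`, then for every
`1 < p < ∞`, `T` is bounded `L^p_m → ℓ^p_m` with norm at most `t₁^(1/p) t∞^((p-1)/p)`. -/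
theorem weighted_riesz_thorin {X : Type*} [MeasurableSpace X] (ν : Measure X)
    (m : X → ℝ) (hmpos : ∀ x, 0 < m x)
    (mseq : ℕ → ℝ) (hmseqpos : ∀ j, 0 < mseq j)
    (T : (X → ℂ) → (ℕ → ℂ))
    (hadd : ∀ f g, T (f + g) = T f + T g)
    (hsmul : ∀ (c : ℂ) (f : X → ℂ), T (c • f) = c • T f)
    (t₁ tinf : ℝ) (ht₁ : 0 ≤ t₁) (htinf : 0 ≤ tinf)
    (hbdd₁ : ∀ f : X → ℂ,
      eLpNorm (fun j => T f j * (mseq j : ℂ)) 1 Measure.count ≤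
        ENNReal.ofReal t₁ * eLpNorm (fun x => f x * (m x : ℂ)) 1 ν)
    (hbddinf : ∀ f : X → ℂ,
      eLpNorm (fun j => T f j * (mseq j : ℂ)) ⊤ Measure.count ≤
        ENNReal.ofReal tinf * eLpNorm (fun x => f x * (m x : ℂ)) ⊤ ν)
    (p : ℝ) (hp : 1 < p) :
    ∀ f : X → ℂ,
      eLpNorm (fun j => T f j * (mseq j : ℂ)) (ENNReal.ofReal p) Measure.count ≤
        ENNReal.ofReal (t₁ ^ (1 / p) * tinf ^ ((p - 1) / p)) *
          eLpNorm (fun x => f x * (m x : ℂ)) (ENNReal.ofReal p) ν :=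
  weighted_riesz_thorin_general ν m mseq T hadd t₁ tinf ht₁ htinf hbdd₁ hbddinf p hp
end

section
/- If a real sequence (a_j) is nonincreasing, positive, and in ℓ^p for 0 < p < q, then with α = 1/p - 1/q, the tail quantity N^α E_{N,q}(a) = N^α (Σ_{j≥N} a_j^q)^{1/q} tends to 0 as N → ∞. -/
/-!
The `p`-th powers `a_j ^ p` are nonincreasing and summable, so
`N a_N ^ p ≤ 2 Σ_{j ≥ N/2} a_j ^ p → 0`, i.e. `N ^ (1/p) a_N → 0`.
On the tail `a_j ≤ a_N`, hence `Σ_{j ≥ N} a_j ^ q ≤ a_N ^ (q - p) Σ_{j ≥ N} a_j ^ p`, and therefore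
`N ^ α E_{N,q}(a) ≤ (N ^ (1/p) a_N) ^ (1 - p/q) (Σ_{j ≥ N} a_j ^ p) ^ (1/q)`,
a product of a null sequence and a bounded one (for `q = ∞` the second factor is `1`).
-/

open MeasureTheory Filter
open scoped ENNReal

noncomputable section

/-- The `q`-tail `E_{N,q}(a) = (Σ_{j≥N} a_j^q)^(1/q)` (ess-sup for `q = ∞`). -/
def tailNorm (a : ℕ → ℝ) (q : ℝ≥0∞) (N : ℕ) : ℝ≥0∞ :=
  eLpNorm (fun j : ℕ => if N ≤ j then a j else 0) q Measure.count

open Topology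

namespace ENNReal

theorem natCast_sub_mul_le_tsum_nat_add {f : ℕ → ℝ≥0∞} (hf : Antitone f) (m n : ℕ) :
    ((n + 1 - m : ℕ) : ℝ≥0∞) * f n ≤ ∑' k, f (k + m) := by
  have hle : ∀ k ∈ Finset.range (n + 1 - m), f n ≤ f (k + m) := fun k hk =>
    hf (by rw [Finset.mem_range] at hk; omega)
  calc ((n + 1 - m : ℕ) : ℝ≥0∞) * f n = (Finset.range (n + 1 - m)).card • f n := by
        rw [Finset.card_range, nsmul_eq_mul]
    _ ≤ ∑ k ∈ Finset.range (n + 1 - m), f (k + m) := Finset.card_nsmul_le_sum _ _ _ hle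
    _ ≤ ∑' k, f (k + m) := ENNReal.sum_le_tsum _

theorem tendsto_natCast_mul_of_antitone {f : ℕ → ℝ≥0∞} (hf : Antitone f)
    (hs : ∑' n, f n ≠ ∞) :
    Tendsto (fun n : ℕ => (n : ℝ≥0∞) * f n) atTop (𝓝 0) := by
  have hhalf : Tendsto (fun n : ℕ => n / 2) atTop atTop :=
    tendsto_atTop_atTop.2 fun b => ⟨2 * b, fun n hn => by omega⟩
  have htail : Tendsto (fun n : ℕ => 2 * ∑' k, f (k + n / 2)) atTop (𝓝 0) := by
    simpa using Tendsto.const_mul ((tendsto_sum_nat_add f hs).comp hhalf)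
      (Or.inr ofNat_ne_top)
  refine tendsto_of_tendsto_of_tendsto_of_le_of_le tendsto_const_nhds htail
    (fun _ => zero_le) fun n => ?_
  calc (n : ℝ≥0∞) * f n ≤ ((2 * (n + 1 - n / 2) : ℕ) : ℝ≥0∞) * f n := by
        gcongr; omega
    _ = 2 * (((n + 1 - n / 2 : ℕ) : ℝ≥0∞) * f n) := by
        rw [Nat.cast_mul, Nat.cast_two, mul_assoc]
    _ ≤ 2 * ∑' k, f (k + n / 2) := by grw [natCast_sub_mul_le_tsum_nat_add hf]

theorem tendsto_natCast_rpow_inv_mul_of_antitone {f : ℕ → ℝ≥0∞} (hf : Antitone f) {p : ℝ}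
    (hp : 0 < p) (hs : ∑' n, f n ^ p ≠ ∞) :
    Tendsto (fun n : ℕ => (n : ℝ≥0∞) ^ p⁻¹ * f n) atTop (𝓝 0) := by
  have hfp : Antitone fun n => f n ^ p := fun m n h => rpow_le_rpow (hf h) hp.le
  have h := (tendsto_natCast_mul_of_antitone hfp hs).ennrpow_const p⁻¹
  rw [zero_rpow_of_pos (inv_pos.2 hp)] at h
  refine h.congr fun n => ?_
  rw [mul_rpow_of_nonneg _ _ (inv_nonneg.2 hp.le), rpow_rpow_inv hp.ne']

theorem tsum_rpow_le_rpow_mul_tsum_rpow {ι : Type*} {g : ι → ℝ≥0∞} {c : ℝ≥0∞}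
    (hg : ∀ i, g i ≤ c) {p r : ℝ} (hp : 0 ≤ p) (hpr : p ≤ r) :
    ∑' i, g i ^ r ≤ c ^ (r - p) * ∑' i, g i ^ p := by
  rw [← ENNReal.tsum_mul_left]
  refine ENNReal.tsum_le_tsum fun i => ?_
  calc g i ^ r = g i ^ (r - p) * g i ^ p := by
        rw [← rpow_add_of_nonneg _ _ (sub_nonneg.2 hpr) hp, sub_add_cancel]
    _ ≤ c ^ (r - p) * g i ^ p := by gcongr; exact hg i

theorem tsum_ite_le_eq_tsum_nat_add (g : ℕ → ℝ≥0∞) (N : ℕ) :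
    ∑' j, (if N ≤ j then g j else 0) = ∑' j, g (j + N) := by
  rw [← ENNReal.summable.sum_add_tsum_nat_add' (k := N), Finset.sum_eq_zero, zero_add]
  · simp only [Nat.le_add_left, if_true]
  · intro j hj
    rw [if_neg (by simpa using hj)]

theorem mul_toReal_one_div_lt_one {p : ℝ} {q : ℝ≥0∞} (hp : 0 ≤ p)
    (hpq : ENNReal.ofReal p < q) :
    p * (1 / q).toReal < 1 := by
  rcases eq_or_ne q ∞ with rfl | hq
  · simp
  · have hr : p < q.toReal := (ofReal_lt_iff_lt_toReal hp hq).1 hpq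
    rwa [toReal_div, toReal_one, mul_one_div, div_lt_one (hp.trans_lt hr)]

end ENNReal

theorem tailNorm_top_le {a : ℕ → ℝ} (ha0 : ∀ j, 0 ≤ a j) (ha : Antitone a) (N : ℕ) :
    tailNorm a ∞ N ≤ ENNReal.ofReal (a N) := by
  rw [tailNorm, eLpNorm_exponent_top]
  refine eLpNormEssSup_le_of_ae_enorm_bound (Eventually.of_forall fun j => ?_)
  split_ifs with h
  · rw [Real.enorm_eq_ofReal (ha0 j)]
    exact ENNReal.ofReal_le_ofReal (ha h)
  · simp

theorem tailNorm_eq_tsum_rpow {a : ℕ → ℝ} (ha0 : ∀ j, 0 ≤ a j) {q : ℝ≥0∞} (hq0 : q ≠ 0)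
    (hq : q ≠ ∞) (N : ℕ) :
    tailNorm a q N = (∑' j, ENNReal.ofReal (a (j + N)) ^ q.toReal) ^ (1 / q.toReal) := by
  rw [tailNorm, eLpNorm_eq_lintegral_rpow_enorm_toReal hq0 hq, lintegral_count,
    ← ENNReal.tsum_ite_le_eq_tsum_nat_add fun j => ENNReal.ofReal (a j) ^ q.toReal]
  congr 2 with j
  split_ifs
  · rw [Real.enorm_eq_ofReal (ha0 j)]
  · simp [ENNReal.toReal_pos hq0 hq]

/-- For `q = ∞` the exponent `(1 / q).toReal` is `0`, so this also covers `E_{N,∞}(a) ≤ a_N`. -/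
theorem tailNorm_le_rpow_mul_tsum_rpow {a : ℕ → ℝ} (ha0 : ∀ j, 0 ≤ a j) (ha : Antitone a)
    {p : ℝ} {q : ℝ≥0∞} (hp : 0 < p) (hpq : ENNReal.ofReal p ≤ q) (N : ℕ) :
    tailNorm a q N ≤ ENNReal.ofReal (a N) ^ (1 - p * (1 / q).toReal) *
      (∑' j, ENNReal.ofReal (a (j + N)) ^ p) ^ (1 / q).toReal := by
  rcases eq_or_ne q ∞ with rfl | hq
  · simpa using tailNorm_top_le ha0 ha N
  have hq0 : q ≠ 0 := ((ENNReal.ofReal_pos.2 hp).trans_le hpq).ne'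
  have hpr : p ≤ q.toReal := by
    rwa [← ENNReal.ofReal_le_iff_le_toReal hq]
  have hr : 0 < q.toReal := hp.trans_le hpr
  rw [tailNorm_eq_tsum_rpow ha0 hq0 hq, one_div q, ENNReal.toReal_inv, ← one_div]
  calc (∑' j, ENNReal.ofReal (a (j + N)) ^ q.toReal) ^ (1 / q.toReal)
      ≤ (ENNReal.ofReal (a N) ^ (q.toReal - p) * ∑' j, ENNReal.ofReal (a (j + N)) ^ p)
          ^ (1 / q.toReal) := by
        gcongr
        exact ENNReal.tsum_rpow_le_rpow_mul_tsum_rpow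
          (fun j => ENNReal.ofReal_le_ofReal (ha (Nat.le_add_left N j))) hp.le hpr
    _ = _ := by
        rw [ENNReal.mul_rpow_of_nonneg _ _ (by positivity), ← ENNReal.rpow_mul]
        congr 2
        field_simp

/-- If a positive nonincreasing sequence lies in `ℓ^p`, `0 < p < q ≤ ∞`, then with
`α = 1/p - 1/q` the tail quantity `N^α E_{N,q}(a)` tends to `0` as `N → ∞`. -/
theorem tail_norm_tendsto_zero (p : ℝ) (q : ℝ≥0∞) (hp : 0 < p) (hpq : ENNReal.ofReal p < q)
    (a : ℕ → ℝ) (hapos : ∀ j, 0 < a j) (hmono : Antitone a)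
    (hlp : (∑' j : ℕ, ENNReal.ofReal (a j) ^ p) < ⊤) :
    Tendsto (fun N : ℕ => ((N : ℝ≥0∞)) ^ (1 / p - (1 / q).toReal) * tailNorm a q N)
      atTop (nhds 0) := by
  have hps := ENNReal.mul_toReal_one_div_lt_one hp.le hpq
  set s := (1 / q).toReal
  set A : ℕ → ℝ≥0∞ := fun j => ENNReal.ofReal (a j)
  have hbound : ∀ N : ℕ, (N : ℝ≥0∞) ^ (1 / p - s) * tailNorm a q N ≤
      ((N : ℝ≥0∞) ^ p⁻¹ * A N) ^ (1 - p * s) * (∑' j, A (j + N) ^ p) ^ s := fun N =>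
    calc (N : ℝ≥0∞) ^ (1 / p - s) * tailNorm a q N
        ≤ (N : ℝ≥0∞) ^ (1 / p - s) * (A N ^ (1 - p * s) * (∑' j, A (j + N) ^ p) ^ s) := by
          gcongr
          exact tailNorm_le_rpow_mul_tsum_rpow (fun j => (hapos j).le) hmono hp hpq.le N
      _ = ((N : ℝ≥0∞) ^ p⁻¹ * A N) ^ (1 - p * s) * (∑' j, A (j + N) ^ p) ^ s := by
          rw [ENNReal.mul_rpow_of_nonneg _ _ (sub_nonneg.2 hps.le), ← ENNReal.rpow_mul,
            ← mul_assoc]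
          congr 3
          field_simp
  have hA : Antitone A := fun _ _ h => ENNReal.ofReal_le_ofReal (hmono h)
  have hfirst :=
    (ENNReal.tendsto_natCast_rpow_inv_mul_of_antitone hA hp hlp.ne).ennrpow_const (1 - p * s)
  rw [ENNReal.zero_rpow_of_pos (sub_pos.2 hps)] at hfirst
  have hlim := ENNReal.Tendsto.mul hfirst
    (Or.inr (ENNReal.rpow_ne_top_of_nonneg ENNReal.toReal_nonneg ENNReal.zero_ne_top))
    ((ENNReal.tendsto_sum_nat_add _ hlp.ne).ennrpow_const s) (Or.inr ENNReal.zero_ne_top)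
  rw [zero_mul] at hlim
  exact tendsto_of_tendsto_of_tendsto_of_le_of_le tendsto_const_nhds hlim (fun _ => zero_le)
    hbound
end
end
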